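/- arXiv:1501.04245 — 2 statements merged into one kernel-verified Lean document; each statement's English description precedes it below -/
import Mathlib

section
/- In a commutative grammar G = (Σ, Q, q₀, δ), if R ∈ ℕ^δ is a nonempty commutative subrun from s ∈ ℕ^Q to t ∈ ℕ^Q, then there is a transition d with R_d > 0, source(d) ∈ supp(s), such that R − [d] is a commutative subrun from s − [source(d)] + target(d) to t. -/
structure CTrans (S Q : Type) where
  src : Q
  out : S → ℤ
  tgt : Q → ℕ

instance {S Q : Type} [Fintype S] [Fintype Q] [DecidableEq S] [DecidableEq Q] :
    DecidableEq (CTrans S Q) := fun a b =>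
  decidable_of_iff (a.src = b.src ∧ a.out = b.out ∧ a.tgt = b.tgt) (by
    cases a; cases b; simp)

structure CGrammar (S Q : Type) [Fintype S] [Fintype Q] [DecidableEq S] [DecidableEq Q] where
  q0 : Q
  delta : Finset (CTrans S Q)

namespace CGrammar

variable {S Q : Type} [Fintype S] [Fintype Q] [DecidableEq S] [DecidableEq Q]

def srcCount (g : CGrammar S Q) (R : CTrans S Q → ℕ) (q : Q) : ℕ :=
  ∑ d ∈ g.delta, if d.src = q then R d else 0

def tgtCount (g : CGrammar S Q) (R : CTrans S Q → ℕ) (q : Q) : ℕ :=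
  ∑ d ∈ g.delta, R d * d.tgt q

def parikh (g : CGrammar S Q) (R : CTrans S Q → ℕ) (a : S) : ℤ :=
  ∑ d ∈ g.delta, (R d : ℤ) * d.out a

def Step (g : CGrammar S Q) (R : CTrans S Q → ℕ) (p q : Q) : Prop :=
  ∃ d ∈ g.delta, 0 < R d ∧ d.src = p ∧ 0 < d.tgt q

def ind (p : Q) : Q → ℕ := fun q => if q = p then 1 else 0

/-- `R` is a commutative subrun from `s` to `t`: support in `delta`,
Euler condition, and connectivity from `s`. -/
def IsSubrun (g : CGrammar S Q) (R : CTrans S Q → ℕ) (s t : Q → ℕ) : Prop :=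
  (∀ d, 0 < R d → d ∈ g.delta) ∧
  (∀ q, (g.srcCount R q : ℤ) - (s q : ℤ) = (g.tgtCount R q : ℤ) - (t q : ℤ)) ∧
  (∀ q, 0 < g.srcCount R q → ∃ p, 0 < s p ∧ Relation.ReflTransGen (g.Step R) p q)

def IsRun (g : CGrammar S Q) (R : CTrans S Q → ℕ) (p : Q) : Prop :=
  g.IsSubrun R (ind p) 0

def IsCycle (g : CGrammar S Q) (R : CTrans S Q → ℕ) (p : Q) : Prop :=
  g.IsSubrun R (ind p) (ind p)

def size (g : CGrammar S Q) (R : CTrans S Q → ℕ) : ℕ := ∑ d ∈ g.delta, R d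

def NormalForm (g : CGrammar S Q) : Prop :=
  ∀ d ∈ g.delta, (∑ q, d.tgt q) ≤ 2 ∧ (∑ a, |d.out a|) ≤ 1

def Regular (g : CGrammar S Q) : Prop :=
  ∀ d ∈ g.delta, (∑ q, d.tgt q) ≤ 1 ∧ (∑ a, |d.out a|) ≤ 1

def Positive (g : CGrammar S Q) : Prop :=
  ∀ d ∈ g.delta, ∀ a, 0 ≤ d.out a

/-- A simple cycle: a cycle (from some nonterminal) that is not the sum of
two nonzero cycles. -/
def SimpleCycle (g : CGrammar S Q) (C : CTrans S Q → ℕ) : Prop :=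
  (∃ p, g.IsCycle C p) ∧
  ¬ ∃ C₁ C₂ p₁ p₂, g.IsCycle C₁ p₁ ∧ g.IsCycle C₂ p₂ ∧
      (∃ d, 0 < C₁ d) ∧ (∃ d, 0 < C₂ d) ∧ (∀ d, C d = C₁ d + C₂ d)

/-- The Parikh image of the grammar. -/
def PsiSet (g : CGrammar S Q) : Set (S → ℤ) :=
  {v | ∃ R, g.IsRun R g.q0 ∧ g.parikh R = v}

end CGrammar

/-!
Firing a transition `d` with `s (src d) > 0` (removing one copy from `R`, moving a token from
`src d` to `tgt d`) always preserves the Euler condition. For connectivity, the states that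
`R - [d]` reaches from `s - [src d] + tgt d` are closed under `R`-steps, since an `R`-step by `d`
lands in `tgt d`; so the only start state that can be lost is `p = src d`, and it only matters
if `p` still has outgoing transitions afterwards.

Take `p ∈ supp s` with an outgoing transition. If `s p ≥ 2`, `p` keeps a token. If some
transition enters `p`, then `p` is reached from some `x ∈ supp s` by a nonempty path: for `x ≠ p`
any transition out of `p` can be fired, and for `x = p` the first transition of that cycle can.
Otherwise the Euler condition at `p` leaves exactly one transition out of `p`, and it is fired.
-/

namespace CGrammar

section Fire

variable {S Q : Type} [DecidableEq Q] {s : Q → ℕ} {d : CTrans S Q} {p q : Q}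

lemma ind_self (p : Q) : ind p p = 1 := if_pos rfl

lemma ind_of_ne (h : q ≠ p) : ind p q = 0 := if_neg h

def fire (s : Q → ℕ) (d : CTrans S Q) : Q → ℕ :=
  fun q => s q - ind d.src q + d.tgt q

lemma fire_pos_of_ne (hp : 0 < s p) (h : p ≠ d.src) : 0 < fire s d p := by
  simp only [fire, ind_of_ne h]; omega

lemma fire_pos_of_tgt_pos (h : 0 < d.tgt p) : 0 < fire s d p :=
  h.trans_le (Nat.le_add_left _ _)

lemma fire_src_pos (h : 1 < s d.src) : 0 < fire s d d.src := by
  simp only [fire, ind_self]; omega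

end Fire

variable {S Q : Type} [Fintype S] [Fintype Q] [DecidableEq S] [DecidableEq Q]

def eraseOne (R : CTrans S Q → ℕ) (d : CTrans S Q) : CTrans S Q → ℕ :=
  fun e => R e - if e = d then 1 else 0

def Reachable (g : CGrammar S Q) (R : CTrans S Q → ℕ) (s : Q → ℕ) (q : Q) : Prop :=
  ∃ p, 0 < s p ∧ Relation.ReflTransGen (g.Step R) p q

variable {g : CGrammar S Q} {R R' : CTrans S Q → ℕ} {s t : Q → ℕ} {d e : CTrans S Q} {p q : Q}

lemma exists_of_tgtCount_pos (h : 0 < g.tgtCount R q) :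
    ∃ e ∈ g.delta, 0 < R e ∧ 0 < e.tgt q := by
  obtain ⟨e, he, hne⟩ := Finset.exists_ne_zero_of_sum_ne_zero h.ne'
  obtain ⟨hR, htgt⟩ := Nat.mul_ne_zero_iff.mp hne
  exact ⟨e, he, Nat.pos_of_ne_zero hR, Nat.pos_of_ne_zero htgt⟩

lemma le_srcCount (hd : d ∈ g.delta) : R d ≤ g.srcCount R d.src := by
  simpa [srcCount] using Finset.single_le_sum (f := fun e => if e.src = d.src then R e else 0)
    (fun _ _ => Nat.zero_le _) hd

lemma srcCount_mono (h : ∀ e, R' e ≤ R e) (q : Q) : g.srcCount R' q ≤ g.srcCount R q :=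
  Finset.sum_le_sum fun e _ => by split_ifs <;> simp [h e]

lemma eraseOne_le (R : CTrans S Q → ℕ) (d e : CTrans S Q) : eraseOne R d e ≤ R e :=
  Nat.sub_le _ _

lemma eraseOne_of_ne (h : e ≠ d) : eraseOne R d e = R e := by
  simp [eraseOne, h]

lemma eraseOne_add_single (hRd : 0 < R d) (e : CTrans S Q) :
    eraseOne R d e + (if e = d then 1 else 0) = R e := by
  unfold eraseOne; split_ifs with h
  · subst h; omega
  · rfl

lemma srcCount_eraseOne (hd : d ∈ g.delta) (hRd : 0 < R d) (q : Q) :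
    g.srcCount (eraseOne R d) q + ind d.src q = g.srcCount R q := by
  have hind : ind d.src q = ∑ e ∈ g.delta, if e = d then (if e.src = q then 1 else 0) else 0 := by
    rw [Finset.sum_ite_eq' g.delta d, if_pos hd]
    unfold ind; split_ifs <;> simp_all
  rw [hind, srcCount, srcCount, ← Finset.sum_add_distrib]
  refine Finset.sum_congr rfl fun e _ => ?_
  rw [← eraseOne_add_single hRd e]
  split_ifs <;> simp

lemma tgtCount_eraseOne (hd : d ∈ g.delta) (hRd : 0 < R d) (q : Q) :
    g.tgtCount (eraseOne R d) q + d.tgt q = g.tgtCount R q := by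
  have htgt : d.tgt q = ∑ e ∈ g.delta, if e = d then e.tgt q else 0 := by
    rw [Finset.sum_ite_eq' g.delta d, if_pos hd]
  rw [htgt, tgtCount, tgtCount, ← Finset.sum_add_distrib]
  refine Finset.sum_congr rfl fun e _ => ?_
  rw [← eraseOne_add_single hRd e]
  split_ifs <;> simp [add_mul]

lemma reachable_eraseOne_fire_of_reflTransGen
    (hp : g.Reachable (eraseOne R d) (fire s d) p)
    (hpq : Relation.ReflTransGen (g.Step R) p q) :
    g.Reachable (eraseOne R d) (fire s d) q := by
  induction hpq with
  | refl => exact hp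
  | tail _ hstep ih =>
    obtain ⟨e, he, hRe, hsrc, htgt⟩ := hstep
    by_cases hed : e = d
    · subst hed
      exact ⟨_, fire_pos_of_tgt_pos htgt, .refl⟩
    · obtain ⟨z, hz, hzp⟩ := ih
      exact ⟨z, hz, hzp.tail ⟨e, he, by rwa [eraseOne_of_ne hed], hsrc, htgt⟩⟩

lemma reachable_eraseOne_fire (hR : g.IsSubrun R s t)
    (hsrc : g.Reachable (eraseOne R d) (fire s d) d.src ∨ g.srcCount (eraseOne R d) d.src = 0)
    (hq : 0 < g.srcCount (eraseOne R d) q) :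
    g.Reachable (eraseOne R d) (fire s d) q := by
  obtain ⟨x, hx, hxq⟩ := hR.2.2 q (hq.trans_le (srcCount_mono (eraseOne_le R d) q))
  by_cases hxd : x = d.src
  · rw [hxd] at hxq
    rcases hsrc with hreach | hexhausted
    · exact reachable_eraseOne_fire_of_reflTransGen hreach hxq
    rcases hxq.cases_head with hq' | ⟨y, ⟨e, he, hRe, he_src, hy⟩, hyq⟩
    · rw [← hq', hexhausted] at hq
      exact absurd hq (lt_irrefl 0)
    · have hed : e = d := by
        by_contra hed
        have := le_srcCount (R := eraseOne R d) he
        rw [eraseOne_of_ne hed, he_src, hexhausted] at this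
        omega
      subst hed
      exact reachable_eraseOne_fire_of_reflTransGen ⟨y, fire_pos_of_tgt_pos hy, .refl⟩ hyq
  · exact reachable_eraseOne_fire_of_reflTransGen ⟨x, fire_pos_of_ne hx hxd, .refl⟩ hxq

lemma isSubrun_eraseOne_fire (hR : g.IsSubrun R s t) (hd : d ∈ g.delta) (hRd : 0 < R d)
    (hs : 0 < s d.src)
    (hsrc : g.Reachable (eraseOne R d) (fire s d) d.src ∨ g.srcCount (eraseOne R d) d.src = 0) :
    g.IsSubrun (eraseOne R d) (fire s d) t := by
  refine ⟨fun e he => hR.1 e (he.trans_le (eraseOne_le R d e)), fun q => ?_,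
    fun q hq => reachable_eraseOne_fire hR hsrc hq⟩
  have hsrcCount := srcCount_eraseOne hd hRd q
  have htgtCount := tgtCount_eraseOne (g := g) hd hRd q
  have heuler := hR.2.1 q
  have hind : ind d.src q ≤ s q := by
    by_cases hq : q = d.src
    · rw [hq, ind_self]; omega
    · rw [ind_of_ne hq]; omega
  simp only [fire]
  omega

lemma exists_src_pos_of_isSubrun (hR : g.IsSubrun R s t) (hne : ∃ d, 0 < R d) :
    ∃ d ∈ g.delta, 0 < R d ∧ 0 < s d.src := by
  obtain ⟨e, he⟩ := hne
  have hmem := hR.1 e he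
  obtain ⟨x, hx, hxe⟩ := hR.2.2 e.src (he.trans_le (le_srcCount hmem))
  rcases hxe.cases_head with rfl | ⟨_, ⟨d, hd, hRd, rfl, _⟩, _⟩
  · exact ⟨e, hmem, he, hx⟩
  · exact ⟨d, hd, hRd, hx⟩

lemma exists_reachable_src_of_tgtCount_pos (hR : g.IsSubrun R s t) (hd : d ∈ g.delta)
    (hRd : 0 < R d) (hin : 0 < g.tgtCount R d.src) :
    ∃ d' ∈ g.delta, 0 < R d' ∧ d'.src = d.src ∧
      g.Reachable (eraseOne R d') (fire s d') d'.src := by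
  obtain ⟨f, hf, hRf, hfd⟩ := exists_of_tgtCount_pos hin
  obtain ⟨x, hx, hxf⟩ := hR.2.2 f.src (hRf.trans_le (le_srcCount hf))
  have hxd : Relation.TransGen (g.Step R) x d.src :=
    Relation.TransGen.tail' hxf ⟨f, hf, hRf, rfl, hfd⟩
  by_cases hx_src : x = d.src
  · rw [hx_src] at hxd
    obtain ⟨y, ⟨d', hd', hRd', hsrc', hy⟩, hyd⟩ := Relation.TransGen.head'_iff.mp hxd
    rw [← hsrc'] at hyd
    exact ⟨d', hd', hRd', hsrc',
      reachable_eraseOne_fire_of_reflTransGen ⟨y, fire_pos_of_tgt_pos hy, .refl⟩ hyd⟩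
  · exact ⟨d, hd, hRd, rfl, reachable_eraseOne_fire_of_reflTransGen
      ⟨x, fire_pos_of_ne hx hx_src, .refl⟩ hxd.to_reflTransGen⟩

lemma exists_firable (hR : g.IsSubrun R s t) (hd : d ∈ g.delta) (hRd : 0 < R d) :
    ∃ d' ∈ g.delta, 0 < R d' ∧ d'.src = d.src ∧
      (g.Reachable (eraseOne R d') (fire s d') d'.src ∨
        g.srcCount (eraseOne R d') d'.src = 0) := by
  by_cases hs₂ : 1 < s d.src
  · exact ⟨d, hd, hRd, rfl, .inl ⟨d.src, fire_src_pos hs₂, .refl⟩⟩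
  by_cases hin : 0 < g.tgtCount R d.src
  · obtain ⟨d', hd', hRd', hsrc', hreach⟩ := exists_reachable_src_of_tgtCount_pos hR hd hRd hin
    exact ⟨d', hd', hRd', hsrc', .inl hreach⟩
  refine ⟨d, hd, hRd, rfl, .inr ?_⟩
  have hsrcCount := srcCount_eraseOne hd hRd d.src
  have heuler := hR.2.1 d.src
  rw [ind_self] at hsrcCount
  omega

end CGrammar

open CGrammar

/-- From a nonempty commutative subrun from `s` to `t` one can extract a first
transition `d` with `R d > 0` and `s (src d) > 0` such that removing one copy of `d`
leaves a subrun from `s - [src d] + tgt d` to `t`. -/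
theorem subrun_first_transition {S Q : Type} [Fintype S] [Fintype Q]
    [DecidableEq S] [DecidableEq Q]
    (g : CGrammar S Q) (R : CTrans S Q → ℕ) (s t : Q → ℕ)
    (hR : g.IsSubrun R s t) (hne : ∃ d, 0 < R d) :
    ∃ d ∈ g.delta, 0 < R d ∧ 0 < s d.src ∧
      g.IsSubrun (fun e => R e - (if e = d then 1 else 0))
        (fun q => s q - ind d.src q + d.tgt q) t := by
  obtain ⟨d₀, hd₀, hRd₀, hs₀⟩ := exists_src_pos_of_isSubrun hR hne
  obtain ⟨d, hd, hRd, hsrc, hfirable⟩ := exists_firable hR hd₀ hRd₀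
  have hs : 0 < s d.src := hsrc ▸ hs₀
  exact ⟨d, hd, hRd, hs, isSubrun_eraseOne_fire hR hd hRd hs hfirable⟩
end

section
/- The universality problem for commutative regular grammars over a one-letter alphabet (given regular G over {a}, decide Ψ(G) = ℕ) is coNP-hard, by reduction from 3CNF-SAT using cycles of distinct prime lengths: for a 3CNF formula φ with n variables and primes p₁,…,p_n, there is a polynomial-size regular grammar G such that x ∉ Ψ(G) iff φ is satisfied by the assignment x_i = x mod p_i. -/
open CGrammar

/-!
Clause `j` becomes a cycle of length `M_j = ∏ₜ p_{a_t}`, entered from the start symbol, that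
emits one letter per step and has an exit at every residue falsifying the clause. Since each
`p_{a_t}` divides `M_j`, the residue `x mod M_j` determines the assignment `x_a = x mod p_a` on the
variables of the clause.

In a run, balance at the start symbol lets exactly one cycle be entered, and connectivity keeps
the run on that cycle. If `c i` and `e i` count the uses of the step and of the exit at position
`i`, balance along the cycle reads `c i + e i = [i = 0] + c (i - 1)`. Summing shows that exactly
one exit `r` is used; summing with weights `i ∈ ZMod M_j` gives `x = ∑ c ≡ r (mod M_j)`.
Conversely, for `x = k M_j + r`, going round `k` times and leaving at `r` is a run. Renaming the
nonterminals to `Fin (q + 1)` does not change the Parikh image.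
-/

open Finset

section CycleBalance

variable {M : ℕ} [NeZero M] {c e : ZMod M → ℕ}

theorem sum_eq_of_cycle_balance {b : ℕ}
    (h : ∀ i, c i + e i = (if i = 0 then b else 0) + c (i - 1)) : ∑ i, e i = b := by
  have hsum := sum_congr rfl fun i (_ : i ∈ univ) => h i
  rw [sum_add_distrib, sum_add_distrib, Fintype.sum_ite_eq',
    Fintype.sum_equiv (Equiv.subRight 1) (fun i => c (i - 1)) c fun _ => rfl] at hsum
  omega

theorem natCast_sum_of_cycle_balance {b : ℕ}
    (h : ∀ i, c i + e i = (if i = 0 then b else 0) + c (i - 1)) :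
    ((∑ i, c i : ℕ) : ZMod M) = ∑ i, (e i : ZMod M) * i := by
  have hsum : ∑ i : ZMod M, ((c i : ZMod M) + e i) * i
      = ∑ i : ZMod M, (((if i = 0 then b else 0 : ℕ) : ZMod M) + c (i - 1)) * i :=
    sum_congr rfl fun i _ => by rw [← Nat.cast_add, h]; push_cast; rfl
  have hshift : ∑ i : ZMod M, (c (i - 1) : ZMod M) * i
      = ∑ i : ZMod M, (c i : ZMod M) * (i + 1) :=
    Fintype.sum_equiv (Equiv.subRight 1) _ _ fun i => by simp
  simp only [add_mul, sum_add_distrib, hshift, mul_add, mul_one, Nat.cast_ite, Nat.cast_zero,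
    ite_mul, zero_mul, Fintype.sum_ite_eq', mul_zero, zero_add] at hsum
  push_cast
  linear_combination -hsum

theorem cycle_balance_of_threshold (k : ℕ) (r i : ZMod M) :
    (k + if i.val < r.val then 1 else 0) + (if i = r then 1 else 0)
      = (if i = 0 then 1 else 0) + (k + if (i - 1).val < r.val then 1 else 0) := by
  obtain ⟨N, rfl⟩ : ∃ N, M = N + 1 := Nat.exists_eq_succ_of_ne_zero (NeZero.ne M)
  change Fin (N + 1) at r i
  change (k + if (i : ℕ) < r then 1 else 0) + (if i = r then 1 else 0)
    = (if i = 0 then 1 else 0) + (k + if ((i - 1 : Fin (N + 1)) : ℕ) < r then 1 else 0)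
  have hr := r.isLt
  simp only [Fin.ext_iff, Fin.val_zero, Fin.coe_sub_one]
  split_ifs <;> omega

theorem sum_val_lt_val (r : ZMod M) : ∑ i : ZMod M, (if i.val < r.val then 1 else 0) = r.val := by
  obtain ⟨N, rfl⟩ : ∃ N, M = N + 1 := Nat.exists_eq_succ_of_ne_zero (NeZero.ne M)
  change Fin (N + 1) at r
  change ∑ i : Fin (N + 1), (if (i : ℕ) < r then 1 else 0) = (r : ℕ)
  rw [sum_boole, Fin.card_filter_val_lt, Nat.cast_id, min_eq_right r.isLt.le]

end CycleBalance

theorem Fintype.exists_eq_ite_of_sum_eq_one {ι : Type*} [Fintype ι] [DecidableEq ι] {f : ι → ℕ}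
    (h : ∑ i, f i = 1) : ∃ i₀, ∀ i, f i = if i = i₀ then 1 else 0 := by
  obtain ⟨i₀, -, hi₀⟩ := exists_ne_zero_of_sum_ne_zero (h.trans_ne one_ne_zero)
  have hsplit := add_sum_erase univ f (mem_univ i₀)
  have hrest : ∑ i ∈ univ.erase i₀, f i = 0 := by omega
  refine ⟨i₀, fun i => ?_⟩
  split_ifs with hi
  · subst hi; omega
  · exact sum_eq_zero_iff.1 hrest i (mem_erase.2 ⟨hi, mem_univ i⟩)

namespace CGrammar

theorem ind_pos_iff {Q : Type} [DecidableEq Q] {p q : Q} : 0 < ind p q ↔ q = p := by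
  unfold ind; split_ifs <;> simp_all

theorem sum_ind {Q : Type} [Fintype Q] [DecidableEq Q] (p : Q) : ∑ q, ind p q = 1 := by
  simp [ind]

theorem ind_injective {Q : Type} [DecidableEq Q] : Function.Injective (ind : Q → Q → ℕ) :=
  fun _ _ h => ind_pos_iff.1 (h ▸ ind_pos_iff.2 rfl)

variable {S Q Q' : Type} [Fintype S] [DecidableEq S] [Fintype Q] [DecidableEq Q]
  [Fintype Q'] [DecidableEq Q']

theorem isRun_iff {g : CGrammar S Q} {R : CTrans S Q → ℕ} {p : Q} :
    g.IsRun R p ↔ (∀ d, 0 < R d → d ∈ g.delta) ∧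
      (∀ q, g.srcCount R q = g.tgtCount R q + ind p q) ∧
      (∀ q, 0 < g.srcCount R q → Relation.ReflTransGen (g.Step R) p q) := by
  refine and_congr Iff.rfl (and_congr (forall_congr' fun q => ?_) (forall_congr' fun q => ?_))
  · simp only [Pi.zero_apply, Nat.cast_zero, sub_zero]
    omega
  · refine imp_congr_right fun _ => ⟨fun ⟨p', hp', h⟩ => ?_, fun h => ⟨p, ind_pos_iff.2 rfl, h⟩⟩
    rwa [← ind_pos_iff.1 hp']

section Relabel

def _root_.CTrans.relabel (e : Q ≃ Q') : CTrans S Q ≃ CTrans S Q' where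
  toFun d := ⟨e d.src, d.out, d.tgt ∘ e.symm⟩
  invFun d := ⟨e.symm d.src, d.out, d.tgt ∘ e⟩
  left_inv d := by simp [Function.comp_def]
  right_inv d := by simp [Function.comp_def]

def relabel (g : CGrammar S Q) (e : Q ≃ Q') : CGrammar S Q' :=
  ⟨e g.q0, g.delta.map (CTrans.relabel e).toEmbedding⟩

variable (g : CGrammar S Q) (e : Q ≃ Q') (R : CTrans S Q' → ℕ)

theorem card_delta_relabel : (g.relabel e).delta.card = g.delta.card :=
  card_map _

theorem srcCount_relabel (q : Q) :
    (g.relabel e).srcCount R (e q) = g.srcCount (R ∘ CTrans.relabel e) q := by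
  simp [srcCount, relabel, CTrans.relabel]

theorem tgtCount_relabel (q : Q) :
    (g.relabel e).tgtCount R (e q) = g.tgtCount (R ∘ CTrans.relabel e) q := by
  simp [tgtCount, relabel, CTrans.relabel]

theorem parikh_relabel : (g.relabel e).parikh R = g.parikh (R ∘ CTrans.relabel e) := by
  ext a
  simp [parikh, relabel, CTrans.relabel]

theorem step_relabel (p q : Q) :
    (g.relabel e).Step R (e p) (e q) ↔ g.Step (R ∘ CTrans.relabel e) p q := by
  constructor
  · rintro ⟨_, hd', hR, hsrc, htgt⟩
    obtain ⟨d, hd, rfl⟩ := mem_map.1 hd'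
    exact ⟨d, hd, hR, e.injective hsrc, by simpa [CTrans.relabel] using htgt⟩
  · rintro ⟨d, hd, hR, rfl, htgt⟩
    exact ⟨_, mem_map_of_mem _ hd, hR, rfl, by simpa [CTrans.relabel]⟩

theorem reflTransGen_step_relabel (p q : Q) :
    Relation.ReflTransGen ((g.relabel e).Step R) (e p) (e q) ↔
      Relation.ReflTransGen (g.Step (R ∘ CTrans.relabel e)) p q := by
  have hstep (a b : Q') (hab : (g.relabel e).Step R a b) :
      g.Step (R ∘ CTrans.relabel e) (e.symm a) (e.symm b) := by
    rwa [← step_relabel, e.apply_symm_apply, e.apply_symm_apply]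
  refine ⟨fun h => ?_, Relation.ReflTransGen.lift e (fun a b => (step_relabel g e R a b).2) _ _⟩
  simpa [Function.onFun] using Relation.ReflTransGen.lift e.symm hstep _ _ h

theorem isRun_relabel (p : Q) :
    (g.relabel e).IsRun R (e p) ↔ g.IsRun (R ∘ CTrans.relabel e) p := by
  rw [isRun_iff, isRun_iff]
  refine and_congr ?_ (and_congr ?_ ?_)
  · rw [← (CTrans.relabel e).forall_congr_right]
    simp [relabel]
  · rw [← e.forall_congr_right]
    simp [srcCount_relabel, tgtCount_relabel, ind]
  · rw [← e.forall_congr_right]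
    simp only [srcCount_relabel, reflTransGen_step_relabel]

theorem psiSet_relabel : (g.relabel e).PsiSet = g.PsiSet := by
  ext v
  constructor
  · rintro ⟨R, hR, rfl⟩
    exact ⟨R ∘ CTrans.relabel e, (isRun_relabel g e R g.q0).1 hR, (parikh_relabel g e R).symm⟩
  · rintro ⟨R₀, hR₀, rfl⟩
    have hR : (R₀ ∘ (CTrans.relabel e).symm) ∘ CTrans.relabel e = R₀ := by
      ext d; simp
    refine ⟨R₀ ∘ (CTrans.relabel e).symm, (isRun_relabel g e _ g.q0).2 (by rwa [hR]), ?_⟩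
    rw [parikh_relabel, hR]

theorem Regular.relabel {g : CGrammar S Q} (hg : g.Regular) (e : Q ≃ Q') :
    (g.relabel e).Regular := by
  intro _ hd'
  obtain ⟨d, hd, rfl⟩ := mem_map.1 hd'
  simpa [CTrans.relabel, Function.comp_def, e.symm.sum_comp d.tgt] using hg d hd

theorem Positive.relabel {g : CGrammar S Q} (hg : g.Positive) (e : Q ≃ Q') :
    (g.relabel e).Positive := by
  intro _ hd'
  obtain ⟨d, hd, rfl⟩ := mem_map.1 hd'
  exact hg d hd

end Relabel

section OfIndexed

variable {E : Type} [Fintype E]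

def ofIndexed (q₀ : Q) (t : E ↪ CTrans S Q) (A : E → Prop) [DecidablePred A] : CGrammar S Q :=
  ⟨q₀, (univ.filter A).map t⟩

variable {q₀ : Q} {t : E ↪ CTrans S Q} {A : E → Prop} [DecidablePred A]

theorem apply_mem_ofIndexed_delta {e : E} : t e ∈ (ofIndexed q₀ t A).delta ↔ A e := by
  simp [ofIndexed]

theorem exists_of_mem_ofIndexed_delta {d : CTrans S Q} (hd : d ∈ (ofIndexed q₀ t A).delta) :
    ∃ e, A e ∧ t e = d := by
  simpa [ofIndexed] using hd

theorem card_ofIndexed_delta_le : (ofIndexed q₀ t A).delta.card ≤ Fintype.card E :=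
  (card_map _).trans_le (card_filter_le _ _)

theorem sum_ofIndexed_delta {β : Type*} [AddCommMonoid β] {R : CTrans S Q → ℕ}
    (hR : ∀ d, 0 < R d → d ∈ (ofIndexed q₀ t A).delta) (f : CTrans S Q → β)
    (hf : ∀ d, R d = 0 → f d = 0) : ∑ d ∈ (ofIndexed q₀ t A).delta, f d = ∑ e, f (t e) := by
  rw [ofIndexed, sum_map, sum_filter_of_ne]
  intro e _ hfe
  by_contra hA
  exact hfe (hf _ (Nat.eq_zero_of_not_pos fun h => hA (apply_mem_ofIndexed_delta.1 (hR _ h))))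

theorem extend_pos_mem_ofIndexed_delta {w : E → ℕ} (hw : ∀ e, ¬ A e → w e = 0) {d : CTrans S Q}
    (hd : 0 < Function.extend t w 0 d) : d ∈ (ofIndexed q₀ t A).delta := by
  by_cases hrange : ∃ e, t e = d
  · obtain ⟨e, rfl⟩ := hrange
    rw [t.injective.extend_apply] at hd
    exact apply_mem_ofIndexed_delta.2 (not_not.1 fun hA => hd.ne' (hw e hA))
  · rw [Function.extend_apply' _ _ _ hrange] at hd
    exact absurd hd (lt_irrefl 0)

end OfIndexed

end CGrammar

namespace Cycles

variable {m : ℕ} (M : Fin m → ℕ)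

/-- `some ⟨j, i⟩` is the nonterminal `S^j_i` at position `i` of the `j`-th cycle; `none` is the
start symbol. -/
abbrev Node := Σ j, ZMod (M j)

def branch (j : Fin m) : CTrans (Fin 1) (Option (Node M)) := ⟨none, 0, ind (some ⟨j, 0⟩)⟩

def step (s : Node M) : CTrans (Fin 1) (Option (Node M)) :=
  ⟨some s, 1, ind (some ⟨s.1, s.2 + 1⟩)⟩

def exit (s : Node M) : CTrans (Fin 1) (Option (Node M)) := ⟨some s, 0, 0⟩

def edge : Fin m ⊕ Node M ⊕ Node M ↪ CTrans (Fin 1) (Option (Node M)) where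
  toFun := Sum.elim (branch M) (Sum.elim (step M) (exit M))
  inj' := by
    refine Function.Injective.sumElim (fun j j' h => ?_)
      (Function.Injective.sumElim (fun s s' h => ?_) (fun s s' h => ?_) fun s s' h => ?_)
      fun j e h => ?_
    · simpa using
        congrArg Sigma.fst (Option.some_injective _ (ind_injective (congrArg CTrans.tgt h)))
    · exact Option.some_injective _ (congrArg CTrans.src h)
    · exact Option.some_injective _ (congrArg CTrans.src h)
    · simpa [step, exit] using congrFun (congrArg CTrans.out h) 0
    · cases e <;> simpa [branch, step, exit] using congrArg CTrans.src h

def IsTransition (F : ∀ j, ZMod (M j) → Prop) : Fin m ⊕ Node M ⊕ Node M → Prop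
  | .inr (.inr s) => F s.1 s.2
  | _ => True

def cycleWeight (j : Fin m) (k : ℕ) (r : ZMod (M j)) : Fin m ⊕ Node M ⊕ Node M → ℕ
  | .inl j' => if j' = j then 1 else 0
  | .inr (.inl s) => if s.1 = j then k + if s.2.val < r.val then 1 else 0 else 0
  | .inr (.inr s) => if s = ⟨j, r⟩ then 1 else 0

/-- The run that enters cycle `j`, goes `k` times round it and leaves at residue `r`. -/
noncomputable def cycleRun (j : Fin m) (k : ℕ) (r : ZMod (M j)) :
    CTrans (Fin 1) (Option (Node M)) → ℕ :=
  Function.extend (edge M) (cycleWeight M j k r) 0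

section CycleRunApply

variable {M} {j : Fin m} {k : ℕ} {r : ZMod (M j)}

theorem cycleRun_branch (j' : Fin m) :
    cycleRun M j k r (branch M j') = if j' = j then 1 else 0 :=
  (edge M).injective.extend_apply _ _ (.inl j')

theorem cycleRun_step (j' : Fin m) (i : ZMod (M j')) :
    cycleRun M j k r (step M ⟨j', i⟩)
      = if j' = j then k + if i.val < r.val then 1 else 0 else 0 :=
  (edge M).injective.extend_apply _ _ (.inr (.inl ⟨j', i⟩))

theorem cycleRun_exit (s : Node M) : cycleRun M j k r (exit M s) = if s = ⟨j, r⟩ then 1 else 0 :=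
  (edge M).injective.extend_apply _ _ (.inr (.inr s))

end CycleRunApply

variable (F : ∀ j, ZMod (M j) → Prop) [∀ j, DecidablePred (F j)]

instance : DecidablePred (IsTransition M F)
  | .inl _ => isTrue trivial
  | .inr (.inl _) => isTrue trivial
  | .inr (.inr s) => inferInstanceAs (Decidable (F s.1 s.2))

variable [∀ j, NeZero (M j)]

def grammar : CGrammar (Fin 1) (Option (Node M)) := ofIndexed none (edge M) (IsTransition M F)

@[simp] theorem grammar_q0 : (grammar M F).q0 = none := rfl

variable {M F}

theorem grammar_regular : (grammar M F).Regular := by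
  intro d hd
  obtain ⟨e, -, rfl⟩ := exists_of_mem_ofIndexed_delta hd
  rcases e with j | s | s <;> simp [edge, branch, step, exit, sum_ind]

theorem grammar_positive : (grammar M F).Positive := by
  intro d hd
  obtain ⟨e, -, rfl⟩ := exists_of_mem_ofIndexed_delta hd
  rcases e with j | s | s <;> simp [edge, branch, step, exit]

theorem card_delta_grammar_le : (grammar M F).delta.card ≤ m + 2 * ∑ j, M j :=
  card_ofIndexed_delta_le.trans_eq (by simp [Fintype.card_sigma]; ring)

theorem exit_mem_delta_iff (s : Node M) : exit M s ∈ (grammar M F).delta ↔ F s.1 s.2 :=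
  apply_mem_ofIndexed_delta (t := edge M) (e := .inr (.inr s))

section Counts

variable {R : CTrans (Fin 1) (Option (Node M)) → ℕ}
  (hR : ∀ d, 0 < R d → d ∈ (grammar M F).delta)
include hR

theorem sum_delta {β : Type*} [AddCommMonoid β] (f : CTrans (Fin 1) (Option (Node M)) → β)
    (hf : ∀ d, R d = 0 → f d = 0) :
    ∑ d ∈ (grammar M F).delta, f d
      = ∑ j, f (branch M j) + (∑ s, f (step M s) + ∑ s, f (exit M s)) := by
  rw [grammar, sum_ofIndexed_delta hR f hf, Fintype.sum_sum_type, Fintype.sum_sum_type]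
  rfl

theorem srcCount_none : (grammar M F).srcCount R none = ∑ j, R (branch M j) := by
  rw [srcCount, sum_delta hR _ fun d h => by simp [h]]
  simp [branch, step, exit]

theorem srcCount_some (s : Node M) :
    (grammar M F).srcCount R (some s) = R (step M s) + R (exit M s) := by
  rw [srcCount, sum_delta hR _ fun d h => by simp [h]]
  simp [branch, step, exit]

theorem tgtCount_none : (grammar M F).tgtCount R none = 0 := by
  rw [tgtCount, sum_delta hR _ fun d h => by simp [h]]
  simp [branch, step, exit, ind]

theorem tgtCount_some (j : Fin m) (i : ZMod (M j)) :
    (grammar M F).tgtCount R (some ⟨j, i⟩)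
      = (if i = 0 then R (branch M j) else 0) + R (step M ⟨j, i - 1⟩) := by
  have hbranch : (branch M j).tgt (some ⟨j, i⟩) = if i = 0 then 1 else 0 := by
    simp [branch, ind]
  have hstep (i' : ZMod (M j)) :
      (step M ⟨j, i'⟩).tgt (some ⟨j, i⟩) = if i' = i - 1 then 1 else 0 := by
    simp [step, ind, eq_sub_iff_add_eq, eq_comm]
  rw [tgtCount, sum_delta hR _ fun d h => by simp [h], Fintype.sum_sigma,
    Fintype.sum_eq_single j fun j' hj' => ?_, Fintype.sum_eq_single j fun j' hj' => ?_]
  · simp [hbranch, hstep, exit]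
  · simp [step, ind, Ne.symm hj']
  · simp [branch, ind, Ne.symm hj']

theorem parikh_eq (a : Fin 1) : (grammar M F).parikh R a = ∑ s, (R (step M s) : ℤ) := by
  rw [parikh, sum_delta hR _ fun d h => by simp [h]]
  simp [branch, step, exit]

end Counts

variable {R : CTrans (Fin 1) (Option (Node M)) → ℕ}

theorem fst_eq_of_reflTransGen_step {j₀ : Fin m}
    (hb : ∀ j, R (branch M j) = if j = j₀ then 1 else 0) {q : Option (Node M)}
    (hq : Relation.ReflTransGen ((grammar M F).Step R) none q) : ∀ s ∈ q, s.1 = j₀ := by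
  induction hq with
  | refl => simp
  | tail _ hstep ih =>
    obtain ⟨d, hd, hRd, rfl, htgt⟩ := hstep
    obtain ⟨e, -, rfl⟩ := exists_of_mem_ofIndexed_delta hd
    rcases e with j | s | s
    · change 0 < R (branch M j) at hRd
      rw [hb] at hRd
      have hj : j = j₀ := of_not_not fun h => by simp [h] at hRd
      simp only [edge, Function.Embedding.coeFn_mk, Sum.elim_inl, branch, ind_pos_iff] at htgt
      simp [htgt, hj]
    · simp only [edge, Function.Embedding.coeFn_mk, Sum.elim_inr, Sum.elim_inl, step,
        ind_pos_iff] at htgt ih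
      simp_all
    · simp [edge, exit] at htgt

theorem eq_zero_of_isRun_of_ne {j₀ : Fin m} (hrun : (grammar M F).IsRun R none)
    (hb : ∀ j, R (branch M j) = if j = j₀ then 1 else 0) {s : Node M} (hs : s.1 ≠ j₀) :
    R (step M s) = 0 ∧ R (exit M s) = 0 := by
  obtain ⟨hR, -, hconn⟩ := isRun_iff.1 hrun
  by_contra h
  have hpos : 0 < (grammar M F).srcCount R (some s) := by
    rw [srcCount_some hR]; omega
  exact hs (fst_eq_of_reflTransGen_step hb (hconn _ hpos) s rfl)

theorem exists_of_mem_psiSet {x : ℕ} (hx : (fun _ => (x : ℤ)) ∈ (grammar M F).PsiSet) :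
    ∃ j, F j x := by
  obtain ⟨R, hrun, hpar⟩ := hx
  obtain ⟨hR, hbal, -⟩ := isRun_iff.1 hrun
  obtain ⟨j₀, hb⟩ := Fintype.exists_eq_ite_of_sum_eq_one (f := fun j => R (branch M j))
    (by simpa [srcCount_none hR, tgtCount_none hR, ind] using hbal none)
  have hcycle (i : ZMod (M j₀)) : R (step M ⟨j₀, i⟩) + R (exit M ⟨j₀, i⟩)
      = (if i = 0 then 1 else 0) + R (step M ⟨j₀, i - 1⟩) := by
    simpa [srcCount_some hR, tgtCount_some hR, hb, ind] using hbal (some ⟨j₀, i⟩)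
  obtain ⟨r, hr⟩ := Fintype.exists_eq_ite_of_sum_eq_one (sum_eq_of_cycle_balance hcycle)
  have hsum : x = ∑ i, R (step M ⟨j₀, i⟩) := by
    have hx : (grammar M F).parikh R 0 = x := congrFun hpar 0
    rw [parikh_eq hR, Fintype.sum_sigma, Fintype.sum_eq_single j₀ fun j hj =>
      sum_eq_zero fun i _ => by rw [(eq_zero_of_isRun_of_ne hrun hb hj).1, Nat.cast_zero]] at hx
    exact_mod_cast hx.symm
  have hxr : (x : ZMod (M j₀)) = r := by
    rw [hsum, natCast_sum_of_cycle_balance hcycle]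
    simp [hr]
  refine ⟨j₀, hxr ▸ (exit_mem_delta_iff ⟨j₀, r⟩).1 (hR _ ?_)⟩
  simp [hr]

section CycleRun

variable {j : Fin m} {k : ℕ} {r : ZMod (M j)}

theorem cycleRun_mem_delta (hr : F j r) {d : CTrans (Fin 1) (Option (Node M))}
    (hd : 0 < cycleRun M j k r d) : d ∈ (grammar M F).delta := by
  refine extend_pos_mem_ofIndexed_delta (fun e he => ?_) hd
  rcases e with _ | _ | s
  · exact absurd trivial he
  · exact absurd trivial he
  · refine if_neg ?_
    rintro rfl
    exact he hr

theorem reflTransGen_cycleRun (hr : F j r) {n : ℕ} (hn : 0 < k ∨ n ≤ r.val) :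
    Relation.ReflTransGen ((grammar M F).Step (cycleRun M j k r)) none (some ⟨j, n⟩) := by
  induction n with
  | zero =>
    have hpos : 0 < cycleRun M j k r (branch M j) := by simp [cycleRun_branch]
    exact .single ⟨branch M j, cycleRun_mem_delta hr hpos, hpos, rfl, by simp [branch, ind]⟩
  | succ n ih =>
    have hpos : 0 < cycleRun M j k r (step M ⟨j, n⟩) := by
      rw [cycleRun_step, if_pos rfl]
      rcases hn with hk | hn
      · exact Nat.add_pos_left hk _
      · rw [ZMod.val_natCast, Nat.mod_eq_of_lt (by have := ZMod.val_lt r; omega),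
          if_pos (by omega)]
        exact Nat.succ_pos k
    exact .tail (ih (by omega))
      ⟨step M ⟨j, n⟩, cycleRun_mem_delta hr hpos, hpos, rfl, by simp [step, ind]⟩

theorem isRun_cycleRun (hr : F j r) : (grammar M F).IsRun (cycleRun M j k r) none := by
  have hR := fun d => cycleRun_mem_delta (k := k) hr (d := d)
  refine isRun_iff.2 ⟨hR, fun q => ?_, fun q hq => ?_⟩
  · rcases q with _ | ⟨j', i⟩
    · simp [srcCount_none hR, tgtCount_none hR, cycleRun_branch, ind]
    · rw [srcCount_some hR, tgtCount_some hR, cycleRun_branch, cycleRun_step, cycleRun_step,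
        cycleRun_exit]
      by_cases hj : j' = j
      · subst hj
        simpa [ind] using cycle_balance_of_threshold k r i
      · simp [hj, ind]
  · rcases q with _ | ⟨j', i⟩
    · exact .refl
    · rw [srcCount_some hR, cycleRun_step, cycleRun_exit] at hq
      by_cases hj : j' = j
      · subst hj
        rw [← ZMod.natCast_zmod_val i]
        refine reflTransGen_cycleRun hr ?_
        by_cases hir : i = r
        · exact .inr (hir ▸ le_rfl)
        · have hne : (⟨j', i⟩ : Node M) ≠ ⟨j', r⟩ := by simpa using hir
          rw [if_pos rfl, if_neg hne] at hq
          split_ifs at hq <;> omega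
      · simp [hj] at hq

theorem parikh_cycleRun (hr : F j r) (a : Fin 1) :
    (grammar M F).parikh (cycleRun M j k r) a = M j * k + r.val := by
  rw [parikh_eq fun d => cycleRun_mem_delta hr, Fintype.sum_sigma,
    Fintype.sum_eq_single j fun j' hj => by simp [cycleRun_step, hj]]
  simp only [cycleRun_step, if_true]
  rw [← Nat.cast_sum, sum_add_distrib, sum_const, card_univ, ZMod.card, smul_eq_mul,
    sum_val_lt_val, Nat.cast_add, Nat.cast_mul]

end CycleRun

theorem mem_psiSet_of {j : Fin m} {x : ℕ} (hx : F j x) :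
    (fun _ => (x : ℤ)) ∈ (grammar M F).PsiSet := by
  refine ⟨cycleRun M j (x / M j) x, isRun_cycleRun hx, funext fun a => ?_⟩
  rw [parikh_cycleRun hx, ZMod.val_natCast, ← Nat.cast_mul, ← Nat.cast_add, Nat.div_add_mod]

theorem mem_psiSet_iff {x : ℕ} : (fun _ => (x : ℤ)) ∈ (grammar M F).PsiSet ↔ ∃ j, F j x :=
  ⟨exists_of_mem_psiSet, fun ⟨_, hj⟩ => mem_psiSet_of hj⟩

end Cycles

section Clauses

variable {n m : ℕ} (Cl : Fin m → Fin 3 → Fin n × Bool) (p : Fin n → ℕ)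

def clauseModulus (j : Fin m) : ℕ := ∏ t, p (Cl j t).1

/-- Literal `(a, b)` of clause `j` reads `x_a = b` under the assignment `x_a = x mod p_a`. -/
def ClauseFalsifiedAt (j : Fin m) (i : ZMod (clauseModulus Cl p j)) : Prop :=
  ∀ t, i.val % p (Cl j t).1 ≠ if (Cl j t).2 then 1 else 0

instance (j : Fin m) : DecidablePred (ClauseFalsifiedAt Cl p j) := fun _ => by
  unfold ClauseFalsifiedAt; infer_instance

theorem clauseFalsifiedAt_natCast_iff (j : Fin m) (x : ℕ) :
    ClauseFalsifiedAt Cl p j x ↔ ∀ t, x % p (Cl j t).1 ≠ if (Cl j t).2 then 1 else 0 := by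
  refine forall_congr' fun t => ?_
  rw [ZMod.val_natCast, clauseModulus, Nat.mod_mod_of_dvd _ (dvd_prod_of_mem _ (mem_univ t))]

theorem clauseModulus_le (j : Fin m) : clauseModulus Cl p j ≤ (∑ i, p i + 2) ^ 3 :=
  (prod_le_pow_card _ _ _ fun _ _ => (single_le_sum (fun i _ => Nat.zero_le (p i))
    (mem_univ _)).trans (Nat.le_add_right _ 2)).trans_eq (by simp)

theorem clauseModulus_ne_zero (hp : ∀ i, (p i).Prime) (j : Fin m) : clauseModulus Cl p j ≠ 0 :=
  prod_ne_zero_iff.2 fun _ _ => (hp _).ne_zero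

end Clauses

/-- coNP-hardness reduction for universality of regular commutative grammars over a
one-letter alphabet: for every 3CNF formula with `n` variables and clauses
`Cl j : Fin 3 → Fin n × Bool`, given distinct primes `p₁,…,p_n`, there is a
polynomial-size positive regular grammar `g` over `{a}` such that a number `x` is
not in `Ψ(g)` iff the formula is satisfied by the assignment `x_i = x mod p_i`. -/
theorem universality_coNP_reduction :
    ∃ c : ℕ, ∀ (n m : ℕ) (Cl : Fin m → Fin 3 → Fin n × Bool) (p : Fin n → ℕ),
      (∀ i, Nat.Prime (p i)) → Function.Injective p →
      ∃ (q : ℕ) (g : CGrammar (Fin 1) (Fin (q + 1))),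
        g.Regular ∧ g.Positive ∧
        q + 1 ≤ c * (m + 1) * ((∑ i, p i) + 2) ^ 3 ∧
        g.delta.card ≤ c * (m + 1) * ((∑ i, p i) + 2) ^ 3 ∧
        ∀ x : ℕ,
          ((fun _ : Fin 1 => (x : ℤ)) ∉ g.PsiSet ↔
            ∀ j : Fin m, ∃ t : Fin 3,
              x % p (Cl j t).1 = (if (Cl j t).2 then 1 else 0)) := by
  refine ⟨3, fun n m Cl p hp _ => ?_⟩
  set M := clauseModulus Cl p
  have : ∀ j, NeZero (M j) := fun j => ⟨clauseModulus_ne_zero Cl p hp j⟩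
  set B := (∑ i, p i + 2) ^ 3
  have hB : 1 ≤ B := Nat.one_le_pow _ _ (by omega)
  have hM : ∑ j, M j ≤ m * B :=
    (sum_le_sum fun j _ => clauseModulus_le Cl p j).trans_eq (by simp [B])
  have hcard := Cycles.card_delta_grammar_le (M := M) (F := ClauseFalsifiedAt Cl p)
  let e : Option (Cycles.Node M) ≃ Fin (∑ j, M j + 1) :=
    Fintype.equivFinOfCardEq (by simp [Fintype.card_sigma])
  refine ⟨∑ j, M j, (Cycles.grammar M (ClauseFalsifiedAt Cl p)).relabel e,
    Cycles.grammar_regular.relabel e, Cycles.grammar_positive.relabel e, by nlinarith,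
    by rw [card_delta_relabel]; nlinarith, fun x => ?_⟩
  rw [psiSet_relabel, Cycles.mem_psiSet_iff, not_exists]
  exact forall_congr' fun j => (not_congr (clauseFalsifiedAt_natCast_iff Cl p j x)).trans
    (by simp only [not_forall, not_not])
end
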